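/- Let α, λ0, λ1, λ3, s0 be real numbers. Define the quadratic form Q on ℝ⁵ by Q(z1,z2,z3,z4,z5) = ((α²λ0² + λ1²)(λ0 − λ3 s0²)/(2λ0²)) z1² + ((α²λ0² + λ1²)/(2λ0)) z2² + (λ1²/(2λ0)) z3² − λ1 z1 z4 + (λ0/2) z4² − λ1 z2 z5 + ½(λ0 − λ3 s0²) z5² (this is the second variation δ²K of the integral combination K = λ0H − λ1V1 − λ2V2 − λ3V3, with λ2 = −(α²λ0² + λ1²)/(2λ0), at the helical motion with parameter s3⁰ = s0, written in deviation variables). Then Q is positive definite if and only if λ0 > 0, λ1 ≠ 0, λ0 − λ3 s0² > 0, and α²λ0³ − (α²λ0² + λ1²) λ3 s0² > 0. In particular these conditions are sufficient conditions of stability of the corresponding element of the family of invariant manifolds of steady motions. -/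

import Mathlib

noncomputable section

/-- The second variation δ²K of K = λ0H − λ1V1 − λ2V2 − λ3V3 (with
λ2 = −(α²λ0² + λ1²)/(2λ0)) at the helical motion with parameter s3⁰ = s0, written in
the deviation variables (z1, z2, z3, z4, z5). -/
def Qvar (α lam0 lam1 lam3 s0 : ℝ) : ℝ × ℝ × ℝ × ℝ × ℝ → ℝ :=
  fun (z1, z2, z3, z4, z5) =>
    ((α ^ 2 * lam0 ^ 2 + lam1 ^ 2) * (lam0 - lam3 * s0 ^ 2) / (2 * lam0 ^ 2)) * z1 ^ 2
      + ((α ^ 2 * lam0 ^ 2 + lam1 ^ 2) / (2 * lam0)) * z2 ^ 2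
      + (lam1 ^ 2 / (2 * lam0)) * z3 ^ 2
      - lam1 * z1 * z4
      + (lam0 / 2) * z4 ^ 2
      - lam1 * z2 * z5
      + (1 / 2) * (lam0 - lam3 * s0 ^ 2) * z5 ^ 2

/-- The quadratic form δ²K is positive definite if and only if λ0 > 0, λ1 ≠ 0,
λ0 − λ3 s0² > 0 and α²λ0³ − (α²λ0² + λ1²)λ3 s0² > 0; these conditions are sufficient
conditions of stability of the corresponding element of the family of invariant
manifolds of steady motions. -/
theorem second_variation_pos_def_iff (α lam0 lam1 lam3 s0 : ℝ) :
    (∀ z : ℝ × ℝ × ℝ × ℝ × ℝ, z ≠ 0 → 0 < Qvar α lam0 lam1 lam3 s0 z) ↔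
      (0 < lam0 ∧ lam1 ≠ 0 ∧ 0 < lam0 - lam3 * s0 ^ 2 ∧
        0 < α ^ 2 * lam0 ^ 3 - (α ^ 2 * lam0 ^ 2 + lam1 ^ 2) * lam3 * s0 ^ 2) := by
  constructor
  · intro H
    have h4 := H (0, 0, 0, 1, 0) (by simp [Prod.ext_iff])
    have h3 := H (0, 0, 1, 0, 0) (by simp [Prod.ext_iff])
    have h5 := H (0, 0, 0, 0, 1) (by simp [Prod.ext_iff])
    simp only [Qvar] at h4 h3 h5
    norm_num at h4 h3 h5
    have hlam0 : 0 < lam0 := by linarith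
    have hlam0' : lam0 ≠ 0 := ne_of_gt hlam0
    have hlam1 : lam1 ≠ 0 := by
      intro h
      rw [h] at h3
      norm_num at h3
    have hD : 0 < lam0 - lam3 * s0 ^ 2 := by linarith
    refine ⟨hlam0, hlam1, hD, ?_⟩
    have hE := H (lam0, 0, 0, lam1, 0) (by simp [Prod.ext_iff]; intro h; exact absurd h hlam0')
    simp only [Qvar] at hE
    have hval : ((α ^ 2 * lam0 ^ 2 + lam1 ^ 2) * (lam0 - lam3 * s0 ^ 2) / (2 * lam0 ^ 2)) * lam0 ^ 2
      + ((α ^ 2 * lam0 ^ 2 + lam1 ^ 2) / (2 * lam0)) * 0 ^ 2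
      + (lam1 ^ 2 / (2 * lam0)) * 0 ^ 2
      - lam1 * lam0 * lam1
      + (lam0 / 2) * lam1 ^ 2
      - lam1 * 0 * 0
      + (1 / 2) * (lam0 - lam3 * s0 ^ 2) * 0 ^ 2
      = (α ^ 2 * lam0 ^ 3 - (α ^ 2 * lam0 ^ 2 + lam1 ^ 2) * lam3 * s0 ^ 2) / 2 := by
      field_simp
      ring
    rw [hval] at hE
    linarith
  · rintro ⟨hlam0, hlam1, hD, hE⟩
    rintro ⟨z1, z2, z3, z4, z5⟩ hz
    have hlam0' : lam0 ≠ 0 := ne_of_gt hlam0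
    have hD' : (lam0 - lam3 * s0 ^ 2) ≠ 0 := ne_of_gt hD
    have hl1 : 0 < lam1 ^ 2 := by positivity
    set D := lam0 - lam3 * s0 ^ 2 with hDdef
    set E := α ^ 2 * lam0 ^ 3 - (α ^ 2 * lam0 ^ 2 + lam1 ^ 2) * lam3 * s0 ^ 2 with hEdef
    have hQ : Qvar α lam0 lam1 lam3 s0 (z1, z2, z3, z4, z5)
        = (E * D * z1 ^ 2 + lam0 * D * (lam0 * z4 - lam1 * z1) ^ 2
            + E * lam0 * z2 ^ 2 + lam0 ^ 2 * (D * z5 - lam1 * z2) ^ 2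
            + lam0 * D * lam1 ^ 2 * z3 ^ 2) / (2 * lam0 ^ 2 * D) := by
      simp only [Qvar, hDdef, hEdef]
      have hD'' : lam0 - lam3 * s0 ^ 2 ≠ 0 := hD'
      field_simp
      ring
    rw [hQ]
    apply div_pos
    · have h1 : 0 ≤ E * D * z1 ^ 2 := by positivity
      have h2 : 0 ≤ lam0 * D * (lam0 * z4 - lam1 * z1) ^ 2 := by positivity
      have h3 : 0 ≤ E * lam0 * z2 ^ 2 := by positivity
      have h4 : 0 ≤ lam0 ^ 2 * (D * z5 - lam1 * z2) ^ 2 := by positivity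
      have h5 : 0 ≤ lam0 * D * lam1 ^ 2 * z3 ^ 2 := by positivity
      have hcases : z1 ≠ 0 ∨ z2 ≠ 0 ∨ z3 ≠ 0 ∨ z4 ≠ 0 ∨ z5 ≠ 0 := by
        by_contra h
        push_neg at h
        obtain ⟨e1, e2, e3, e4, e5⟩ := h
        exact hz (by simp [e1, e2, e3, e4, e5, Prod.ext_iff])
      rcases hcases with h | h | h | h | h
      · have : 0 < E * D * z1 ^ 2 := by positivity
        linarith
      · have : 0 < E * lam0 * z2 ^ 2 := by positivity
        linarith
      · have : 0 < lam0 * D * lam1 ^ 2 * z3 ^ 2 := by positivity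
        linarith
      · by_cases h1' : z1 = 0
        · have hne : lam0 * z4 - lam1 * z1 ≠ 0 := by
            rw [h1']; simpa using mul_ne_zero hlam0' h
          have : 0 < lam0 * D * (lam0 * z4 - lam1 * z1) ^ 2 :=
            mul_pos (mul_pos hlam0 hD) (pow_two_pos_of_ne_zero hne)
          linarith
        · have : 0 < E * D * z1 ^ 2 :=
            mul_pos (mul_pos hE hD) (pow_two_pos_of_ne_zero h1')
          linarith
      · by_cases h2' : z2 = 0
        · have hne : D * z5 - lam1 * z2 ≠ 0 := by
            rw [h2']; simpa using mul_ne_zero hD' h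
          have : 0 < lam0 ^ 2 * (D * z5 - lam1 * z2) ^ 2 :=
            mul_pos (pow_pos hlam0 2) (pow_two_pos_of_ne_zero hne)
          linarith
        · have : 0 < E * lam0 * z2 ^ 2 :=
            mul_pos (mul_pos hE hlam0) (pow_two_pos_of_ne_zero h2')
          linarith
    · positivity
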